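/- Let n ≥ 2 and let v₁, …, vₙ be positive integers with gcd(v₁, …, vₙ) = 1. If the function f(t) = min_{1 ≤ i ≤ n} ‖t·vᵢ‖ has a local maximum at a real number t₀, then there exist indices 1 ≤ i < j ≤ n and an integer m such that t₀ = m/(vᵢ + vⱼ). -/

import Mathlib

/-- `dnn x` is the distance from `x` to the nearest integer:
`dnn x = min_{m : ℤ} |x - m|`. -/
noncomputable def dnn (x : ℝ) : ℝ := ⨅ m : ℤ, |x - m|

/-- The maximum loneliness of speeds `v 0, …, v (n-1)`:
`ML v = sup_{t : ℝ} min_{i} dnn (t * v i)`. -/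
noncomputable def ML {n : ℕ} (v : Fin n → ℝ) : ℝ := ⨆ t : ℝ, ⨅ i, dnn (t * v i)

/-!
Write `F t = min_i ‖t vᵢ‖` and `c = F t₀`. To the right of `t₀`, each `‖t vᵢ‖` with
`‖t₀ vᵢ‖ > c` stays above `c`, and one with `‖t₀ vᵢ‖ = c` increases unless `t₀ vᵢ` lies at
distance `c` *below* an integer. So at a local maximum some `t₀ vⱼ + c` is an integer, and,
since `F` is even, some `t₀ vᵢ - c` is an integer as well; subtracting, `t₀ (vᵢ + vⱼ) ∈ ℤ`.
If the two indices coincide then `c = 1/2`, so every `t₀ vₖ` is a half-integer and any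
second index does the job.
-/

open Filter Topology

lemma dnn_eq_abs_sub_round (x : ℝ) : dnn x = |x - round x| :=
  le_antisymm (ciInf_le ⟨0, by rintro _ ⟨m, rfl⟩; positivity⟩ (round x)) (le_ciInf (round_le x))

lemma dnn_eq_min_fract (x : ℝ) : dnn x = min (Int.fract x) (1 - Int.fract x) := by
  rw [dnn_eq_abs_sub_round, abs_sub_round_eq_min]

lemma dnn_le_half (x : ℝ) : dnn x ≤ 1 / 2 := by
  rw [dnn_eq_min_fract, min_le_iff]
  by_contra! h
  linarith [h.1, h.2]

lemma dnn_neg (x : ℝ) : dnn (-x) = dnn x := by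
  unfold dnn
  rw [← (Equiv.neg ℤ).iInf_comp]
  congr! 1 with m
  simp only [Equiv.neg_apply, Int.cast_neg, sub_neg_eq_add, neg_add_eq_sub, abs_sub_comm]

lemma lipschitzWith_one_dnn : LipschitzWith 1 dnn :=
  LipschitzWith.of_le_add fun x y => by
    rw [dnn_eq_abs_sub_round x, dnn_eq_abs_sub_round y, Real.dist_eq]
    calc |x - round x| ≤ |x - round y| := round_le x (round y)
      _ ≤ |x - y| + |y - round y| := abs_sub_le x y _
      _ = |y - round y| + |x - y| := add_comm _ _

lemma eventually_lt_dnn_add {x c : ℝ} (hc : c ≤ dnn x) (hx : Int.fract x ≠ 1 - c) :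
    ∀ᶠ w in 𝓝[>] 0, c < dnn (x + w) := by
  rcases hc.lt_or_eq with hlt | heq
  · have hcont : Tendsto (fun w => dnn (x + w)) (𝓝 0) (𝓝 (dnn x)) := by
      simpa only [Function.comp_def, add_zero] using
        (lipschitzWith_one_dnn.continuous.comp (continuous_const_add x)).tendsto 0
    exact nhdsWithin_le_nhds (hcont.eventually (lt_mem_nhds hlt))
  · rw [dnn_eq_min_fract] at heq
    have hfract : Int.fract x = c := by
      rcases min_choice (Int.fract x) (1 - Int.fract x) with h | h
      · rw [heq, h]
      · exact absurd (by linarith) hx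
    have hc_half : c < 1 / 2 := by
      have := heq ▸ min_le_right (Int.fract x) (1 - Int.fract x)
      exact lt_of_le_of_ne (by linarith) fun h => hx (by linarith)
    filter_upwards [Ioo_mem_nhdsGT (show (0 : ℝ) < 1 - 2 * c by linarith)] with w hw
    have hshift : Int.fract (x + w) = c + w :=
      Int.fract_eq_iff.2 ⟨by linarith [hw.1, Int.fract_nonneg x],
        by linarith [hw.2, Int.fract_nonneg x], ⌊x⌋, by linarith [Int.self_sub_floor x]⟩
    rw [dnn_eq_min_fract, hshift]
    exact lt_min (by linarith [hw.1]) (by linarith [hw.2])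

lemma eventually_lt_dnn_mul {t₀ a c : ℝ} (ha : 0 < a) (hc : c ≤ dnn (t₀ * a))
    (h : Int.fract (t₀ * a) ≠ 1 - c) : ∀ᶠ t in 𝓝[>] t₀, c < dnn (t * a) := by
  have hscale : Tendsto (fun t => (t - t₀) * a) (𝓝[>] t₀) (𝓝[>] 0) := by
    refine tendsto_nhdsWithin_of_tendsto_nhds_of_eventually_within _ ?_ ?_
    · exact ((continuous_id.sub continuous_const).mul continuous_const).tendsto' t₀ 0 (by simp)
        |>.mono_left nhdsWithin_le_nhds
    · filter_upwards [self_mem_nhdsWithin] with t (ht : t₀ < t)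
      exact mul_pos (sub_pos.2 ht) ha
  filter_upwards [hscale.eventually (eventually_lt_dnn_add hc h)] with t ht
  rwa [show t₀ * a + (t - t₀) * a = t * a by ring] at ht

lemma exists_fract_eq_one_sub_of_isLocalMax {ι : Type*} [Finite ι] [Nonempty ι] {a : ι → ℝ}
    (ha : ∀ i, 0 < a i) {t₀ : ℝ} (h : IsLocalMax (fun t => ⨅ i, dnn (t * a i)) t₀) :
    ∃ j, Int.fract (t₀ * a j) = 1 - ⨅ i, dnn (t₀ * a i) := by
  by_contra! hne
  have hlt : ∀ᶠ t in 𝓝[>] t₀, ∀ j, (⨅ i, dnn (t₀ * a i)) < dnn (t * a j) :=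
    eventually_all.2 fun j =>
      eventually_lt_dnn_mul (ha j) (ciInf_le (Finite.bddBelow_range _) j) (hne j)
  obtain ⟨t, hgt, hle⟩ := (hlt.and (nhdsWithin_le_nhds h)).exists
  obtain ⟨j, hj⟩ := exists_eq_ciInf_of_finite (f := fun i => dnn (t * a i))
  exact (hgt j).not_ge (hj ▸ hle)

lemma IsLocalMax.iInf_dnn_mul_neg {ι : Type*} {a : ι → ℝ} {t₀ : ℝ}
    (h : IsLocalMax (fun t => ⨅ i, dnn (t * a i)) t₀) :
    IsLocalMax (fun t => ⨅ i, dnn (t * a i)) (-t₀) := by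
  have heven : (fun t => ⨅ i, dnn (t * a i)) ∘ Neg.neg = fun t => ⨅ i, dnn (t * a i) := by
    funext t
    simp only [Function.comp_apply, neg_mul, dnn_neg]
  rw [← heven]
  exact ((neg_neg t₀).symm ▸ h).comp_continuous continuous_neg.continuousAt

lemma exists_add_eq_intCast_of_fract_eq {x y b : ℝ} (hx : Int.fract x = b)
    (hy : Int.fract (-y) = b) : ∃ m : ℤ, y + x = m :=
  ⟨⌊x⌋ - ⌊-y⌋, by push_cast; linarith [Int.self_sub_floor x, Int.self_sub_floor (-y)]⟩

theorem exists_ne_mul_add_eq_intCast_of_isLocalMax {ι : Type*} [Finite ι] [Nontrivial ι]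
    {a : ι → ℝ} (ha : ∀ i, 0 < a i) {t₀ : ℝ} (h : IsLocalMax (fun t => ⨅ i, dnn (t * a i)) t₀) :
    ∃ i j, i ≠ j ∧ ∃ m : ℤ, t₀ * (a i + a j) = m := by
  set c := ⨅ i, dnn (t₀ * a i) with hc
  have hc_le : ∀ k, c ≤ dnn (t₀ * a k) := ciInf_le (Finite.bddBelow_range _)
  obtain ⟨j, hj⟩ := exists_fract_eq_one_sub_of_isLocalMax ha h
  obtain ⟨i, hi⟩ := exists_fract_eq_one_sub_of_isLocalMax ha h.iInf_dnn_mul_neg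
  rw [← hc] at hj
  simp only [neg_mul, dnn_neg, ← hc] at hi
  simp_rw [mul_add]
  by_cases hij : i = j
  · subst hij
    have hc_half : c = 1 / 2 := by
      have hfract_ne : Int.fract (t₀ * a i) ≠ 0 := by linarith [hc_le i, dnn_le_half (t₀ * a i)]
      linarith [Int.fract_neg hfract_ne]
    obtain ⟨k, hk⟩ := exists_ne i
    have hk_fract : Int.fract (t₀ * a k) = 1 - c := by
      have := le_min_iff.1 (dnn_eq_min_fract _ ▸ hc_half ▸ hc_le k)
      linarith [this.1, this.2]
    exact ⟨i, k, hk.symm, exists_add_eq_intCast_of_fract_eq hk_fract hi⟩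
  · exact ⟨i, j, hij, exists_add_eq_intCast_of_fract_eq hj hi⟩

theorem stmt_14_general (n : ℕ) (hn : 2 ≤ n) (v : Fin n → ℕ) (hpos : ∀ i, 0 < v i) (t₀ : ℝ)
    (hmax : IsLocalMax (fun t : ℝ => ⨅ i, dnn (t * (v i : ℝ))) t₀) :
    ∃ i j : Fin n, i < j ∧ ∃ m : ℤ, t₀ = (m : ℝ) / ((v i : ℝ) + (v j : ℝ)) := by
  have : Nontrivial (Fin n) := Fin.nontrivial_iff_two_le.2 hn
  have hvpos : ∀ i, (0 : ℝ) < v i := fun i => Nat.cast_pos.2 (hpos i)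
  obtain ⟨i, j, hij, m, hm⟩ := exists_ne_mul_add_eq_intCast_of_isLocalMax hvpos hmax
  rcases hij.lt_or_gt with h | h
  · exact ⟨i, j, h, m, eq_div_of_mul_eq (add_pos (hvpos i) (hvpos j)).ne' hm⟩
  · rw [add_comm] at hm
    exact ⟨j, i, h, m, eq_div_of_mul_eq (add_pos (hvpos j) (hvpos i)).ne' hm⟩

theorem stmt_14 (n : ℕ) (hn : 2 ≤ n) (v : Fin n → ℕ) (hpos : ∀ i, 0 < v i)
    (hgcd : Finset.univ.gcd v = 1) (t₀ : ℝ)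
    (hmax : IsLocalMax (fun t : ℝ => ⨅ i, dnn (t * (v i : ℝ))) t₀) :
    ∃ i j : Fin n, i < j ∧ ∃ m : ℤ, t₀ = (m : ℝ) / ((v i : ℝ) + (v j : ℝ)) :=
  stmt_14_general n hn v hpos t₀ hmax
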